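/- The function f(δ⁺, δ⁻) = A⁺·e^{-k·δ⁺}·(δ⁺ + b) + A⁻·e^{-k·δ⁻}·(δ⁻ - b) + b·H is jointly concave on the rectangle [0, 2/k - b] × [0, 2/k + b], provided A⁺, A⁻, k > 0 and |b| ≤ 2/k. -/

import Mathlib

/-!
Each summand depends on one coordinate only, and `x ↦ A e^{-kx} (x + c)` has second derivative
`A k e^{-kx} (k (x + c) - 2)`, which is nonpositive for `x ≤ 2 / k - c`. A sum of concave
functions of separate coordinates is concave on the product of their domains.
-/

open Real Set

section Prod

variable {𝕜 E F β : Type*} [Semiring 𝕜] [PartialOrder 𝕜] [AddCommMonoid E] [AddCommMonoid F]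
  [Module 𝕜 E] [Module 𝕜 F] [AddCommMonoid β] [PartialOrder β] [IsOrderedAddMonoid β]
  [DistribMulAction 𝕜 β] {s : Set E} {t : Set F} {f : E → β} {g : F → β}

theorem ConcaveOn.fst_add_snd (hf : ConcaveOn 𝕜 s f) (hg : ConcaveOn 𝕜 t g) :
    ConcaveOn 𝕜 (s ×ˢ t) fun p => f p.1 + g p.2 :=
  have hst : Convex 𝕜 (s ×ˢ t) := hf.1.prod hg.1
  ((hf.comp_linearMap (LinearMap.fst 𝕜 E F)).subset (fun _ hp => hp.1) hst).add
    ((hg.comp_linearMap (LinearMap.snd 𝕜 E F)).subset (fun _ hp => hp.2) hst)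

end Prod

theorem hasDerivAt_exp_neg_mul (k x : ℝ) :
    HasDerivAt (fun x => exp (-k * x)) (exp (-k * x) * -k) x :=
  ((hasDerivAt_id x).const_mul (-k)).exp.congr_deriv (by simp)

theorem hasDerivAt_mul_exp_neg_mul_add (A k c x : ℝ) :
    HasDerivAt (fun x => A * exp (-k * x) * (x + c)) (A * exp (-k * x) * (1 - k * (x + c))) x :=
  (((hasDerivAt_exp_neg_mul k x).const_mul A).mul ((hasDerivAt_id' x).add_const c)).congr_deriv
    (by ring)

theorem hasDerivAt_mul_exp_neg_mul_one_sub (A k c x : ℝ) :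
    HasDerivAt (fun x => A * exp (-k * x) * (1 - k * (x + c)))
      (A * k * exp (-k * x) * (k * (x + c) - 2)) x :=
  (((hasDerivAt_exp_neg_mul k x).const_mul A).mul
    ((((hasDerivAt_id' x).add_const c).const_mul k).const_sub 1)).congr_deriv (by ring)

theorem concaveOn_mul_exp_neg_mul_add {A k : ℝ} (c : ℝ) (hA : 0 ≤ A) (hk : 0 < k) :
    ConcaveOn ℝ (Iic (2 / k - c)) fun x => A * exp (-k * x) * (x + c) := by
  refine concaveOn_of_hasDerivWithinAt2_nonpos (convex_Iic _) (by fun_prop)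
    (fun x _ => (hasDerivAt_mul_exp_neg_mul_add A k c x).hasDerivWithinAt)
    (fun x _ => (hasDerivAt_mul_exp_neg_mul_one_sub A k c x).hasDerivWithinAt) ?_
  intro x hx
  rw [interior_Iic, mem_Iio, lt_sub_iff_add_lt, lt_div_iff₀ hk] at hx
  exact mul_nonpos_of_nonneg_of_nonpos (by positivity) (by linarith)

theorem stmt_4_general (Ap Am k b H : ℝ) (hAp : 0 < Ap) (hAm : 0 < Am) (hk : 0 < k) :
    ConcaveOn ℝ (Set.Icc 0 (2 / k - b) ×ˢ Set.Icc 0 (2 / k + b))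
      (fun p : ℝ × ℝ =>
        Ap * Real.exp (-k * p.1) * (p.1 + b) + Am * Real.exp (-k * p.2) * (p.2 - b)
          + b * H) := by
  have hbid : ConcaveOn ℝ (Icc 0 (2 / k - b)) fun x => Ap * exp (-k * x) * (x + b) :=
    (concaveOn_mul_exp_neg_mul_add b hAp.le hk).subset Icc_subset_Iic_self (convex_Icc _ _)
  have hask : ConcaveOn ℝ (Icc 0 (2 / k + b)) fun y => Am * exp (-k * y) * (y - b) := by
    simpa only [sub_neg_eq_add, ← sub_eq_add_neg] using
      (concaveOn_mul_exp_neg_mul_add (-b) hAm.le hk).subset Icc_subset_Iic_self (convex_Icc _ _)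
  exact (hbid.fst_add_snd hask).add_const (b * H)

theorem stmt_4 (Ap Am k b H : ℝ) (hAp : 0 < Ap) (hAm : 0 < Am) (hk : 0 < k)
    (hb : |b| ≤ 2 / k) :
    ConcaveOn ℝ (Set.Icc 0 (2 / k - b) ×ˢ Set.Icc 0 (2 / k + b))
      (fun p : ℝ × ℝ =>
        Ap * Real.exp (-k * p.1) * (p.1 + b) + Am * Real.exp (-k * p.2) * (p.2 - b)
          + b * H) :=
  stmt_4_general Ap Am k b H hAp hAm hk
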